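/- Let X ~ MML(α, π, T) with Coxian phase-type component: π = (π_1,…,π_p), T upper-bidiagonal with diagonal entries −λ_j and superdiagonal entries λ_j, where λ_1,…,λ_p are distinct and positive. Then the density of X is f(x) = x^{α−1} Σ_{j=1}^p π_j (∏_{k=j}^p λ_k) Σ_{m=j}^p E_{α,α}(−λ_m x^α) / ∏_{n=j, n≠m}^p (λ_n − λ_m) for x > 0. -/

import Mathlib

/-!
With `B` the Coxian generator, `t = -B𝟙` is `λ_p` times the last basis vector, so only the last
column of `E_{α,α}(x^α B) = Σ_k x^{αk} B^k / Γ(αk + α)` matters. The recursion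
`(B^{k+1})_{j,p} = -λ_j (B^k)_{j,p} + λ_j (B^k)_{j+1,p}` is the Leibniz rule
`(z f)[x_j, …, x_p] = x_j f[x_j, …, x_p] + f[x_{j+1}, …, x_p]` for divided differences, whence
`λ_p (B^k)_{j,p} = (∏_{i ≥ j} λ_i) · (z ↦ z^k)[-λ_j, …, -λ_p]`. Divided differences are linear
and the Mittag-Leffler series converges absolutely (log-convexity of `Γ` gives
`Γ(y + α) ≥ (y - 1)^α Γ(y)`), so summing over `k` yields the divided difference of
`z ↦ E_{α,α}(z x^α)`, which is the stated partial-fraction sum.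
-/

open Matrix Finset

/-- The matrix Mittag-Leffler function `E_{α,β}(A) = Σ_{k≥0} A^k / Γ(αk+β)`. -/
noncomputable def matrixML {p : ℕ} (α β : ℝ) (A : Matrix (Fin p) (Fin p) ℝ) :
    Matrix (Fin p) (Fin p) ℝ :=
  ∑' k : ℕ, (Real.Gamma (α * k + β))⁻¹ • A ^ k

/-- The scalar two-parameter Mittag-Leffler function. -/
noncomputable def scalarML (α β z : ℝ) : ℝ :=
  ∑' k : ℕ, z ^ k / Real.Gamma (α * k + β)

open Filter

/-- The divided difference `f[x_i : i ∈ s]`, in its symmetric (Lagrange) form. -/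
noncomputable def divDiff {ι K : Type*} [DecidableEq ι] [Field K] (s : Finset ι) (x : ι → K)
    (f : K → K) : K :=
  ∑ m ∈ s, f (x m) / ∏ n ∈ s.erase m, (x m - x n)

section DivDiff

variable {ι K : Type*} [DecidableEq ι] [Field K] {s : Finset ι} {x : ι → K}

@[simp]
theorem divDiff_singleton (a : ι) (f : K → K) : divDiff {a} x f = f (x a) := by
  simp [divDiff]

theorem divDiff_pow_eq_zero (hx : Set.InjOn x s) {k : ℕ} (hk : k + 1 < #s) :
    divDiff s x (· ^ k) = 0 := by
  have h := Lagrange.coeff_eq_sum hx (P := Polynomial.X ^ k)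
    (by rw [Polynomial.degree_X_pow]; exact_mod_cast (by omega : k < #s))
  simpa [divDiff, Polynomial.coeff_X_pow, show #s - 1 ≠ k by omega, eq_comm] using h

theorem divDiff_insert_mul_self {a : ι} (ha : a ∉ s) (hx : Set.InjOn x (insert a s))
    (f : K → K) :
    divDiff (insert a s) x (fun z => z * f z) = x a * divDiff (insert a s) x f + divDiff s x f := by
  rw [← sub_eq_iff_eq_add', divDiff, divDiff, mul_sum, ← sum_sub_distrib, sum_insert ha,
    mul_div_assoc, sub_self, zero_add, divDiff]
  refine sum_congr rfl fun m hm => ?_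
  have hma : x m - x a ≠ 0 :=
    sub_ne_zero.mpr fun h => ha (hx (Set.mem_insert_of_mem _ hm) (Set.mem_insert a _) h ▸ hm)
  rw [erase_insert_of_ne (ne_of_mem_of_not_mem hm ha).symm,
    prod_insert fun h => ha (mem_of_mem_erase h), ← mul_div_assoc, ← sub_div, ← sub_mul,
    mul_div_mul_left _ _ hma]

theorem hasSum_divDiff [TopologicalSpace K] [IsTopologicalRing K] {c : ℕ → K} {f : K → K}
    (hf : ∀ m ∈ s, HasSum (fun k => c k * x m ^ k) (f (x m))) :
    HasSum (fun k => c k * divDiff s x (· ^ k)) (divDiff s x f) := by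
  simp only [divDiff, mul_sum, ← mul_div_assoc]
  exact hasSum_sum fun m hm => (hf m hm).div_const _

end DivDiff

/-- The entry `e (Fin.last _)` does not occur in the matrix. -/
def upperBidiagonal {p : ℕ} {R : Type*} [Zero R] (d e : Fin p → R) : Matrix (Fin p) (Fin p) R :=
  Matrix.of fun i j => if j = i then d i else if (j : ℕ) = (i : ℕ) + 1 then e i else 0

theorem Fin.Ici_castSucc {n : ℕ} (i : Fin n) :
    Ici i.castSucc = insert i.castSucc (Ici i.succ) := by
  ext m
  simp only [mem_Ici, mem_insert, Fin.le_def, Fin.ext_iff, Fin.val_castSucc, Fin.val_succ]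
  omega

theorem Fin.Ici_last (n : ℕ) : Ici (Fin.last n) = {Fin.last n} := by
  ext m
  simp [Fin.last_le_iff]

section UpperBidiagonal

variable {n : ℕ}

section Semiring

variable {R : Type*} [NonAssocSemiring R] (d e v : Fin (n + 1) → R)

theorem upperBidiagonal_mulVec_castSucc (i : Fin n) :
    (upperBidiagonal d e *ᵥ v) i.castSucc =
      d i.castSucc * v i.castSucc + e i.castSucc * v i.succ := by
  have hne : i.castSucc ≠ i.succ := Fin.castSucc_lt_succ.ne
  rw [mulVec, dotProduct, Fintype.sum_eq_add _ _ hne]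
  · simp [upperBidiagonal, hne.symm]
  · rintro m ⟨hm₁, hm₂⟩
    have : (m : ℕ) ≠ i + 1 := fun h => hm₂ (Fin.ext h)
    simp [upperBidiagonal, hm₁, this]

theorem upperBidiagonal_mulVec_last :
    (upperBidiagonal d e *ᵥ v) (Fin.last n) = d (Fin.last n) * v (Fin.last n) := by
  rw [mulVec, dotProduct, Fintype.sum_eq_single (Fin.last n)]
  · simp [upperBidiagonal]
  · intro m hm
    have : (m : ℕ) ≠ n + 1 := by omega
    simp [upperBidiagonal, hm, this]

end Semiring

theorem upperBidiagonal_neg_mulVec_one {R : Type*} [Ring R] (e : Fin (n + 1) → R) :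
    upperBidiagonal (-e) e *ᵥ (fun _ => 1) = -Pi.single (Fin.last n) (e (Fin.last n)) := by
  funext j
  induction j using Fin.lastCases with
  | last => simp [upperBidiagonal_mulVec_last]
  | cast i => simp [upperBidiagonal_mulVec_castSucc, (Fin.castSucc_lt_last i).ne]

theorem upperBidiagonal_pow_apply_last {K : Type*} [Field K] {d : Fin (n + 1) → K}
    (hd : Function.Injective d) (e : Fin (n + 1) → K) (k : ℕ) (j : Fin (n + 1)) :
    e (Fin.last n) * (upperBidiagonal d e ^ k) j (Fin.last n) =
      (∏ i ∈ Ici j, e i) * divDiff (Ici j) d (· ^ k) := by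
  induction k generalizing j with
  | zero =>
    induction j using Fin.lastCases with
    | last => simp [Fin.Ici_last]
    | cast i =>
      have hcard : 0 + 1 < #(Ici i.castSucc) := by simp [Fin.card_Ici]; omega
      rw [pow_zero, one_apply_ne (Fin.castSucc_lt_last i).ne, divDiff_pow_eq_zero hd.injOn hcard,
        mul_zero, mul_zero]
  | succ k ih =>
    have hrow (j : Fin (n + 1)) : (upperBidiagonal d e ^ (k + 1)) j (Fin.last n) =
        (upperBidiagonal d e *ᵥ fun m => (upperBidiagonal d e ^ k) m (Fin.last n)) j := by
      rw [pow_succ']; rfl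
    have hpow : (· ^ (k + 1) : K → K) = fun z => z * z ^ k := funext fun z => pow_succ' z k
    induction j using Fin.lastCases with
    | last =>
      rw [hrow, upperBidiagonal_mulVec_last, mul_left_comm, ih]
      simp only [Fin.Ici_last, prod_singleton, divDiff_singleton]
      ring
    | cast i =>
      have hi : i.castSucc ∉ Ici i.succ := by simp
      have ih₁ := ih i.castSucc
      have ih₂ := ih i.succ
      rw [Fin.Ici_castSucc, prod_insert hi] at ih₁ ⊢
      rw [hrow, upperBidiagonal_mulVec_castSucc, hpow, divDiff_insert_mul_self hi hd.injOn]
      linear_combination d i.castSucc * ih₁ + e i.castSucc * ih₂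

end UpperBidiagonal

namespace Real

theorem sub_one_rpow_mul_Gamma_le_Gamma_add {a y : ℝ} (ha : 0 < a) (hy : 1 < y) :
    (y - 1) ^ a * Gamma y ≤ Gamma (y + a) := by
  have hy₁ : 0 < y - 1 := sub_pos.mpr hy
  have hΓ : 0 < Gamma y := Gamma_pos_of_pos (by linarith)
  have hrec : log (Gamma y) - log (Gamma (y - 1)) = log (y - 1) := by
    have h := Gamma_add_one hy₁.ne'
    rw [sub_add_cancel] at h
    rw [h, log_mul hy₁.ne' (Gamma_pos_of_pos hy₁).ne', add_sub_cancel_right]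
  -- log-convexity: the slope `log (y - 1)` of `log ∘ Γ` on `[y - 1, y]` is at most
  -- its slope on `[y, y + a]`
  have hslope := convexOn_log_Gamma.slope_mono_adjacent (x := y - 1) (y := y) (z := y + a)
    hy₁ (by simp; linarith) (by linarith) (by linarith)
  simp only [Function.comp_apply, sub_sub_cancel, div_one, add_sub_cancel_left] at hslope
  rw [hrec, le_div_iff₀ ha] at hslope
  rw [← log_le_log_iff (by positivity) (Gamma_pos_of_pos (by linarith)),
    log_mul (by positivity) hΓ.ne', log_rpow hy₁]
  linarith

theorem summable_pow_div_Gamma {α : ℝ} (hα : 0 < α) (β z : ℝ) :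
    Summable fun k : ℕ => z ^ k / Gamma (α * k + β) := by
  refine summable_of_ratio_norm_eventually_le (r := 1 / 2) (by norm_num) ?_
  have hy : Tendsto (fun k : ℕ => α * k + β) atTop atTop :=
    tendsto_atTop_add_const_right _ _ (tendsto_natCast_atTop_atTop.const_mul_atTop hα)
  have hpow : Tendsto (fun k : ℕ => (α * k + β - 1) ^ α) atTop atTop :=
    (tendsto_rpow_atTop hα).comp (tendsto_atTop_add_const_right _ (-1) hy)
  filter_upwards [hy.eventually_ge_atTop 2, hpow.eventually_ge_atTop (2 * |z|)] with k hk hzk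
  set y := α * k + β
  have hΓ : 0 < Gamma y := Gamma_pos_of_pos (by linarith)
  have hΓ' : 0 < Gamma (y + α) := Gamma_pos_of_pos (by linarith)
  have hgrow : 2 * |z| * Gamma y ≤ Gamma (y + α) :=
    (mul_le_mul_of_nonneg_right hzk hΓ.le).trans
      (sub_one_rpow_mul_Gamma_le_Gamma_add hα (by linarith))
  have hstep : α * ((k + 1 : ℕ) : ℝ) + β = y + α := by push_cast; ring
  rw [hstep, norm_div, norm_div, norm_pow, norm_pow, norm_of_nonneg hΓ.le,
    norm_of_nonneg hΓ'.le, div_le_iff₀ hΓ', norm_eq_abs]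
  calc |z| ^ (k + 1) = 1 / 2 * (|z| ^ k / Gamma y) * (2 * |z| * Gamma y) := by
        field_simp; ring
    _ ≤ 1 / 2 * (|z| ^ k / Gamma y) * Gamma (y + α) := by gcongr

theorem summable_Gamma_inv_smul_pow {A : Type*} [NormedRing A] [NormedAlgebra ℝ A]
    [CompleteSpace A] {α : ℝ} (hα : 0 < α) (β : ℝ) (a : A) :
    Summable fun k : ℕ => (Gamma (α * k + β))⁻¹ • a ^ k := by
  refine .of_norm_bounded_eventually_nat (summable_pow_div_Gamma hα β ‖a‖).abs ?_
  filter_upwards [eventually_ge_atTop 1] with k hk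
  rw [norm_smul, abs_div, abs_pow, abs_norm, div_eq_inv_mul, norm_inv, norm_eq_abs]
  gcongr
  exact norm_pow_le' a hk

end Real

theorem hasSum_scalarML {α : ℝ} (hα : 0 < α) (β z : ℝ) :
    HasSum (fun k : ℕ => z ^ k / Real.Gamma (α * k + β)) (scalarML α β z) :=
  (Real.summable_pow_div_Gamma hα β z).hasSum

section MatrixNorm

attribute [local instance] Matrix.linftyOpNormedRing Matrix.linftyOpNormedAlgebra

theorem hasSum_matrixML_apply {p : ℕ} {α : ℝ} (hα : 0 < α) (β : ℝ)
    (A : Matrix (Fin p) (Fin p) ℝ) (i j : Fin p) :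
    HasSum (fun k : ℕ => (Real.Gamma (α * k + β))⁻¹ * (A ^ k) i j) (matrixML α β A i j) :=
  Pi.hasSum.mp (Pi.hasSum.mp (Real.summable_Gamma_inv_smul_pow hα β A).hasSum i) j

end MatrixNorm

theorem matrixML_smul_upperBidiagonal_neg_apply_last {n : ℕ} {α : ℝ} (hα : 0 < α) (β : ℝ)
    {e : Fin (n + 1) → ℝ} (he : Function.Injective e) (r : ℝ) (j : Fin (n + 1)) :
    matrixML α β (r • upperBidiagonal (-e) e) j (Fin.last n) * e (Fin.last n) =
      (∏ i ∈ Ici j, e i) *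
        ∑ m ∈ Ici j, scalarML α β (-e m * r) / ∏ l ∈ (Ici j).erase m, (e l - e m) := by
  have hdivDiff :
      ∑ m ∈ Ici j, scalarML α β (-e m * r) / ∏ l ∈ (Ici j).erase m, (e l - e m) =
        divDiff (Ici j) (-e) (fun z => scalarML α β (z * r)) := by
    simp only [divDiff, Pi.neg_apply, neg_sub_neg]
  have hnodes : ∀ m ∈ Ici j, HasSum (fun k : ℕ => r ^ k / Real.Gamma (α * k + β) * (-e) m ^ k)
      (scalarML α β ((-e) m * r)) := by
    intro m _
    convert hasSum_scalarML hα β ((-e) m * r) using 1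
    funext k
    ring
  rw [hdivDiff]
  have h1 := (hasSum_matrixML_apply hα β (r • upperBidiagonal (-e) e) j (Fin.last n)).mul_right
    (e (Fin.last n))
  have h2 := (hasSum_divDiff (x := -e) (f := fun z => scalarML α β (z * r)) hnodes).mul_left
    (∏ i ∈ Ici j, e i)
  refine h1.unique (h2.congr_fun fun k => ?_)
  have hpow := upperBidiagonal_pow_apply_last (d := -e) (neg_injective.comp he) e k j
  rw [smul_pow, Matrix.smul_apply, smul_eq_mul]
  linear_combination (r ^ k * (Real.Gamma (α * k + β))⁻¹) * hpow

theorem mml_coxian_density_general {p : ℕ} (α : ℝ) (hα : α ∈ Set.Ioc (0 : ℝ) 1)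
    (lam : Fin p → ℝ) (hdist : Function.Injective lam)
    (π : Fin p → ℝ) :
    let T : Matrix (Fin p) (Fin p) ℝ := Matrix.of fun i j =>
      if j = i then -lam i else if (j : ℕ) = (i : ℕ) + 1 then lam i else 0
    let t : Fin p → ℝ := -(T *ᵥ fun _ => 1)
    ∀ x : ℝ, 0 < x →
      x ^ (α - 1) * (π ⬝ᵥ (matrixML α α (x ^ α • T) *ᵥ t))
        = x ^ (α - 1) * ∑ j : Fin p, π j *
            (∏ k ∈ univ.filter (fun k => j ≤ k), lam k) *
            ∑ m ∈ univ.filter (fun m => j ≤ m),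
              scalarML α α (-lam m * x ^ α) /
                ∏ n ∈ (univ.filter (fun n => j ≤ n)).erase m, (lam n - lam m) := by
  intro T t x _
  obtain _ | n := p
  · simp
  have hT : T = upperBidiagonal (-lam) lam := rfl
  have ht : t = Pi.single (Fin.last n) (lam (Fin.last n)) :=
    neg_eq_iff_eq_neg.mpr (upperBidiagonal_neg_mulVec_one lam)
  congr 1
  simp only [ht, hT, mulVec_single, dotProduct, filter_le_eq_Ici, Pi.smul_apply,
    MulOpposite.smul_eq_mul_unop, MulOpposite.unop_op, col_apply]
  refine sum_congr rfl fun j _ => ?_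
  rw [mul_assoc, matrixML_smul_upperBidiagonal_neg_apply_last hα.1 α hdist]

/-- The MML(α,π,T) density with Coxian phase-type component (distinct
positive rates `λ_1,…,λ_p`) is
`f(x) = x^{α-1} Σ_j π_j (Π_{k≥j} λ_k) Σ_{m≥j} E_{α,α}(-λ_m x^α) / Π_{n≥j, n≠m}(λ_n - λ_m)`. -/
theorem mml_coxian_density {p : ℕ} (hp : 0 < p) (α : ℝ) (hα : α ∈ Set.Ioc (0 : ℝ) 1)
    (lam : Fin p → ℝ) (hlam : ∀ i, 0 < lam i) (hdist : Function.Injective lam)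
    (π : Fin p → ℝ) (hπ : ∀ i, 0 ≤ π i) (hπ1 : ∑ i, π i = 1) :
    let T : Matrix (Fin p) (Fin p) ℝ := Matrix.of fun i j =>
      if j = i then -lam i else if (j : ℕ) = (i : ℕ) + 1 then lam i else 0
    let t : Fin p → ℝ := -(T *ᵥ fun _ => 1)
    ∀ x : ℝ, 0 < x →
      x ^ (α - 1) * (π ⬝ᵥ (matrixML α α (x ^ α • T) *ᵥ t))
        = x ^ (α - 1) * ∑ j : Fin p, π j *
            (∏ k ∈ univ.filter (fun k => j ≤ k), lam k) *
            ∑ m ∈ univ.filter (fun m => j ≤ m),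
              scalarML α α (-lam m * x ^ α) /
                ∏ n ∈ (univ.filter (fun n => j ≤ n)).erase m, (lam n - lam m) :=
  mml_coxian_density_general α hα lam hdist π
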